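/- Let n be a positive integer and σ a real number, and set J(x, y) = Σ_{k=0}^{n−1} σ^k φ_k(x) φ_k(y). Then for all real x, y: (x + ∂_x)J(x, y) − σ (y − ∂_y)J(x, y) = −2 σ^n a_n φ_{n−1}(x) φ_n(y), where a_n = √(n/2). -/

import Mathlib

/-!
The functions `φ_k` satisfy the ladder relations `(x + ∂)φ_k = √(2k) φ_{k-1}` and
`(x - ∂)φ_k = √(2(k+1)) φ_{k+1}`, which follow from `H_k' = 2k H_{k-1}` and the three-term
recurrence once the normalising constants are compared. Applied termwise to `J`, they turn
`(x + ∂_x)J` into `Σ_{k<n} f(k)` and `σ(y - ∂_y)J` into `Σ_{k<n} f(k+1)`, where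
`f(k) = √(2k) σ^k φ_{k-1}(x) φ_k(y)`; the difference telescopes to `-f(n)`, and
`√(2n) = 2 a_n`.
-/

/-- The physicist Hermite polynomials, as real functions:
`H₀ = 1`, `H₁(x) = 2x`, `H_{n+2}(x) = 2x·H_{n+1}(x) − 2(n+1)·H_n(x)`. -/
noncomputable def physHermite : ℕ → ℝ → ℝ
  | 0 => fun _ => 1
  | 1 => fun x => 2 * x
  | (n + 2) => fun x => 2 * x * physHermite (n + 1) x - 2 * (n + 1) * physHermite n x

/-- The normalized Hermite polynomials `p_k(x) = H_k(x)/√(2^k k! √π)`. -/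
noncomputable def normHermite (k : ℕ) (x : ℝ) : ℝ :=
  physHermite k x / Real.sqrt (2 ^ k * k.factorial * Real.sqrt Real.pi)

/-- The harmonic oscillator functions `φ_k(x) = e^{−x²/2} p_k(x)`. -/
noncomputable def oscFun (k : ℕ) (x : ℝ) : ℝ :=
  Real.exp (-x ^ 2 / 2) * normHermite k x

/-- The kernel `J(x, y) = Σ_{k=0}^{n−1} σ^k φ_k(x) φ_k(y)` from the proof of Lemma 3 of
Tracy–Widom, "Differential Equations for Dyson Processes". -/
noncomputable def hermiteJ (n : ℕ) (σ : ℝ) (x y : ℝ) : ℝ :=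
  ∑ k ∈ Finset.range n, σ ^ k * oscFun k x * oscFun k y

noncomputable def hermiteNormConst (k : ℕ) : ℝ :=
  Real.sqrt (2 ^ k * k.factorial * Real.sqrt Real.pi)

lemma hermiteNormConst_pos (k : ℕ) : 0 < hermiteNormConst k :=
  Real.sqrt_pos.2 (by positivity)

lemma normHermite_eq_div (k : ℕ) (x : ℝ) :
    normHermite k x = physHermite k x / hermiteNormConst k := rfl

lemma hermiteNormConst_succ (k : ℕ) :
    hermiteNormConst (k + 1) = Real.sqrt (2 * (k + 1)) * hermiteNormConst k := by
  rw [hermiteNormConst, hermiteNormConst, ← Real.sqrt_mul (by positivity), Nat.factorial_succ]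
  push_cast
  ring_nf

/-- The recurrence with `k - 1` in place of `k`: at `k = 0` the junk value `H_{0-1} = H_0`
is multiplied by `0`. -/
lemma physHermite_succ (k : ℕ) (x : ℝ) :
    physHermite (k + 1) x = 2 * x * physHermite k x - 2 * k * physHermite (k - 1) x := by
  cases k with
  | zero => simp [physHermite]
  | succ m =>
    simp only [physHermite, Nat.add_sub_cancel]
    push_cast
    ring

lemma hasDerivAt_physHermite (k : ℕ) (x : ℝ) :
    HasDerivAt (physHermite k) (2 * k * physHermite (k - 1) x) x := by
  induction k using Nat.twoStepInduction generalizing x with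
  | zero => simpa [physHermite] using hasDerivAt_const x (1 : ℝ)
  | one => simpa [physHermite] using (hasDerivAt_id x).const_mul (2 : ℝ)
  | more n ih₀ ih₁ =>
    have hrec : physHermite (n + 2) =
        fun x => 2 * x * physHermite (n + 1) x - 2 * ((n : ℝ) + 1) * physHermite n x := by
      funext z
      simp only [physHermite]
    have hderiv := (((hasDerivAt_id x).const_mul 2).fun_mul (ih₁ x)).fun_sub
      ((ih₀ x).const_mul (2 * ((n : ℝ) + 1)))
    rw [hrec]
    refine hderiv.congr_deriv ?_
    simp only [id, Nat.add_one_sub_one, show n + 2 - 1 = n + 1 from rfl, physHermite_succ n x]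
    push_cast
    ring

lemma sqrt_mul_normHermite_succ (k : ℕ) (x : ℝ) :
    Real.sqrt (2 * (k + 1)) * normHermite (k + 1) x =
      physHermite (k + 1) x / hermiteNormConst k := by
  have hs : 0 < Real.sqrt (2 * ((k : ℝ) + 1)) := Real.sqrt_pos.2 (by positivity)
  rw [normHermite_eq_div, hermiteNormConst_succ]
  field_simp [hs.ne', (hermiteNormConst_pos k).ne']

lemma sqrt_mul_normHermite_pred (k : ℕ) (x : ℝ) :
    Real.sqrt (2 * k) * normHermite (k - 1) x =
      2 * k * physHermite (k - 1) x / hermiteNormConst k := by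
  cases k with
  | zero => simp
  | succ m =>
    have hs : 0 < Real.sqrt (2 * ((m : ℝ) + 1)) := Real.sqrt_pos.2 (by positivity)
    have hsq := Real.mul_self_sqrt (show (0 : ℝ) ≤ 2 * ((m : ℝ) + 1) by positivity)
    rw [Nat.add_sub_cancel, normHermite_eq_div, hermiteNormConst_succ]
    push_cast
    field_simp [hs.ne', (hermiteNormConst_pos m).ne']
    linear_combination physHermite m x * hsq

lemma hasDerivAt_normHermite (k : ℕ) (x : ℝ) :
    HasDerivAt (normHermite k) (Real.sqrt (2 * k) * normHermite (k - 1) x) x := by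
  rw [sqrt_mul_normHermite_pred]
  exact (hasDerivAt_physHermite k x).div_const _

lemma two_mul_mul_normHermite (k : ℕ) (x : ℝ) :
    2 * x * normHermite k x
      = Real.sqrt (2 * (k + 1)) * normHermite (k + 1) x
        + Real.sqrt (2 * k) * normHermite (k - 1) x := by
  rw [sqrt_mul_normHermite_succ, sqrt_mul_normHermite_pred, normHermite_eq_div,
    physHermite_succ]
  ring

lemma hasDerivAt_oscFun (k : ℕ) (x : ℝ) :
    HasDerivAt (oscFun k) (-x * oscFun k x + Real.sqrt (2 * k) * oscFun (k - 1) x) x := by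
  have hgauss : HasDerivAt (fun x : ℝ => Real.exp (-x ^ 2 / 2)) (Real.exp (-x ^ 2 / 2) * -x) x :=
    ((hasDerivAt_pow 2 x).fun_neg.div_const 2).exp.congr_deriv (by push_cast; ring)
  refine (hgauss.mul (hasDerivAt_normHermite k x)).congr_deriv ?_
  unfold oscFun
  ring

lemma differentiable_oscFun (k : ℕ) : Differentiable ℝ (oscFun k) :=
  fun x => (hasDerivAt_oscFun k x).differentiableAt

lemma oscFun_lowering (k : ℕ) (x : ℝ) :
    x * oscFun k x + deriv (oscFun k) x = Real.sqrt (2 * k) * oscFun (k - 1) x := by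
  rw [(hasDerivAt_oscFun k x).deriv]
  ring

lemma oscFun_raising (k : ℕ) (x : ℝ) :
    x * oscFun k x - deriv (oscFun k) x = Real.sqrt (2 * (k + 1)) * oscFun (k + 1) x := by
  rw [(hasDerivAt_oscFun k x).deriv]
  simp only [oscFun]
  linear_combination Real.exp (-x ^ 2 / 2) * two_mul_mul_normHermite k x

lemma x_mul_hermiteJ_add_deriv (n : ℕ) (σ x y : ℝ) :
    x * hermiteJ n σ x y + deriv (fun u => hermiteJ n σ u y) x
      = ∑ k ∈ Finset.range n, Real.sqrt (2 * k) * σ ^ k * oscFun (k - 1) x * oscFun k y := by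
  have hderiv : HasDerivAt (fun u => hermiteJ n σ u y)
      (∑ k ∈ Finset.range n, σ ^ k * deriv (oscFun k) x * oscFun k y) x :=
    HasDerivAt.fun_sum fun k _ =>
      ((differentiable_oscFun k x).hasDerivAt.const_mul _).mul_const _
  rw [hderiv.deriv, hermiteJ, Finset.mul_sum, ← Finset.sum_add_distrib]
  refine Finset.sum_congr rfl fun k _ => ?_
  linear_combination σ ^ k * oscFun k y * oscFun_lowering k x

lemma sigma_mul_y_mul_hermiteJ_sub_deriv (n : ℕ) (σ x y : ℝ) :
    σ * (y * hermiteJ n σ x y - deriv (fun v => hermiteJ n σ x v) y)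
      = ∑ k ∈ Finset.range n,
          Real.sqrt (2 * (k + 1)) * σ ^ (k + 1) * oscFun k x * oscFun (k + 1) y := by
  have hderiv : HasDerivAt (fun v => hermiteJ n σ x v)
      (∑ k ∈ Finset.range n, σ ^ k * oscFun k x * deriv (oscFun k) y) y :=
    HasDerivAt.fun_sum fun k _ =>
      (differentiable_oscFun k y).hasDerivAt.const_mul _
  rw [hderiv.deriv, hermiteJ, Finset.mul_sum, ← Finset.sum_sub_distrib, Finset.mul_sum]
  refine Finset.sum_congr rfl fun k _ => ?_
  linear_combination σ ^ (k + 1) * oscFun k x * oscFun_raising k y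

theorem hermiteJ_identity_general (n : ℕ) (σ : ℝ) (x y : ℝ) :
    (x * hermiteJ n σ x y + deriv (fun u => hermiteJ n σ u y) x)
      - σ * (y * hermiteJ n σ x y - deriv (fun v => hermiteJ n σ x v) y)
    = -2 * σ ^ n * Real.sqrt (n / 2) * oscFun (n - 1) x * oscFun n y := by
  set f : ℕ → ℝ := fun k => Real.sqrt (2 * k) * σ ^ k * oscFun (k - 1) x * oscFun k y
  have hshift : ∀ k ∈ Finset.range n,
      Real.sqrt (2 * (k + 1)) * σ ^ (k + 1) * oscFun k x * oscFun (k + 1) y = f (k + 1) := by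
    intro k _
    simp [f]
  have hsqrt : Real.sqrt (2 * n) = 2 * Real.sqrt (n / 2) := by
    rw [show (2 * n : ℝ) = 2 ^ 2 * (n / 2) by ring, Real.sqrt_mul (by positivity),
      Real.sqrt_sq zero_le_two]
  rw [x_mul_hermiteJ_add_deriv, sigma_mul_y_mul_hermiteJ_sub_deriv, Finset.sum_congr rfl hshift,
    ← Finset.sum_sub_distrib, Finset.sum_range_sub']
  simp only [hsqrt, Nat.cast_zero, mul_zero, Real.sqrt_zero, zero_mul, zero_sub]
  ring

/-- **Key identity in the proof of Lemma 3 (Section V of Tracy–Widom, "Differential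
Equations for Dyson Processes").**  With `J(x, y) = Σ_{k=0}^{n−1} σ^k φ_k(x) φ_k(y)` and
`a_n = √(n/2)`, one has
`(x + ∂_x)J(x, y) − σ(y − ∂_y)J(x, y) = −2 σ^n a_n φ_{n−1}(x) φ_n(y)`. -/
theorem hermiteJ_identity (n : ℕ) (hn : 0 < n) (σ : ℝ) (x y : ℝ) :
    (x * hermiteJ n σ x y + deriv (fun u => hermiteJ n σ u y) x)
      - σ * (y * hermiteJ n σ x y - deriv (fun v => hermiteJ n σ x v) y)
    = -2 * σ ^ n * Real.sqrt (n / 2) * oscFun (n - 1) x * oscFun n y :=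
  hermiteJ_identity_general n σ x y
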